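/- Let C₄ > 0 satisfy sin²(π/8)·cosh(C₄) = 2. In a hyperbolic triangle with side lengths a, b, c and opposite angles A, B, C, if a ≥ C₄ and c ≥ b, then angle B ≤ π/8. -/
import Mathlib


open Real

/-- A (nondegenerate) geodesic triangle in the hyperbolic plane of curvature −1,
recorded through its side lengths `a, b, c`, opposite angles `A, B, C`, and the
standard trigonometric laws it satisfies: the hyperbolic law of sines, the hyperbolic
law of cosines for angles, the angle-sum defect, and side–angle monotonicity. -/
structure HyperbolicTriangle where
  a : ℝ
  b : ℝ
  c : ℝ
  A : ℝ
  B : ℝ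
  C : ℝ
  a_pos : 0 < a
  b_pos : 0 < b
  c_pos : 0 < c
  A_pos : 0 < A
  B_pos : 0 < B
  C_pos : 0 < C
  angle_sum_lt : A + B + C < π
  sine_rule_ab : Real.sinh a * Real.sin B = Real.sinh b * Real.sin A
  sine_rule_ac : Real.sinh a * Real.sin C = Real.sinh c * Real.sin A
  sine_rule_bc : Real.sinh b * Real.sin C = Real.sinh c * Real.sin B
  cos_rule_A : Real.cos A = -(Real.cos B * Real.cos C) + Real.sin B * Real.sin C * Real.cosh a
  cos_rule_B : Real.cos B = -(Real.cos A * Real.cos C) + Real.sin A * Real.sin C * Real.cosh b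
  cos_rule_C : Real.cos C = -(Real.cos A * Real.cos B) + Real.sin A * Real.sin B * Real.cosh c
  side_angle_ab : a ≤ b ↔ A ≤ B
  side_angle_ac : a ≤ c ↔ A ≤ C
  side_angle_bc : b ≤ c ↔ B ≤ C

lemma sin_ge_aux {x : ℝ} (h1 : π/8 ≤ x) (h2 : x ≤ π - π/8) :
    Real.sin (π/8) ≤ Real.sin x := by
  have hpi := Real.pi_pos
  rcases le_or_gt x (π/2) with h | h
  · exact Real.strictMonoOn_sin.monotoneOn (by constructor <;> linarith)
      (by constructor <;> linarith) h1
  · rw [← Real.sin_pi_sub x]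
    exact Real.strictMonoOn_sin.monotoneOn (by constructor <;> linarith)
      (by constructor <;> linarith) (by linarith)

/-- Lemma 2.8(d): with `C₄ > 0` satisfying `sin²(π/8) · cosh C₄ = 2`, in a hyperbolic
triangle with `a ≥ C₄` and `c ≥ b`, the angle `B` is at most `π/8`. -/
theorem stmt7 (C₄ : ℝ) (hC₄pos : 0 < C₄)
    (hC₄ : Real.sin (π / 8) ^ 2 * Real.cosh C₄ = 2)
    (t : HyperbolicTriangle) (ha : C₄ ≤ t.a) (hcb : t.b ≤ t.c) :
    t.B ≤ π / 8 := by
  by_contra h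
  push_neg at h
  have hpi := Real.pi_pos
  have hBC : t.B ≤ t.C := t.side_angle_bc.mp hcb
  have hA := t.A_pos
  have hB := t.B_pos
  have hC := t.C_pos
  have hsum := t.angle_sum_lt
  have hB2 : t.B < π/2 := by linarith
  have hsB : Real.sin (π/8) < Real.sin t.B :=
    Real.strictMonoOn_sin (by constructor <;> linarith) (by constructor <;> linarith) h
  have hsC : Real.sin (π/8) ≤ Real.sin t.C := sin_ge_aux (by linarith) (by linarith)
  have hsp : 0 < Real.sin (π/8) := Real.sin_pos_of_pos_of_lt_pi (by linarith) (by linarith)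
  have hcosh : Real.cosh C₄ ≤ Real.cosh t.a := by
    rw [Real.cosh_le_cosh]
    rw [abs_of_pos hC₄pos, abs_of_pos t.a_pos]
    exact ha
  have hsB0 : 0 < Real.sin t.B := hsp.trans hsB
  have hsC0 : 0 < Real.sin t.C := lt_of_lt_of_le hsp hsC
  have hprod : 2 < Real.sin t.B * Real.sin t.C * Real.cosh t.a := by
    calc (2:ℝ) = Real.sin (π/8) ^ 2 * Real.cosh C₄ := hC₄.symm
    _ ≤ Real.sin (π/8) ^ 2 * Real.cosh t.a := by
        apply mul_le_mul_of_nonneg_left hcosh (by positivity)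
    _ < Real.sin t.B * Real.sin t.C * Real.cosh t.a := by
        apply mul_lt_mul_of_pos_right _ (Real.cosh_pos t.a)
        rw [sq]
        exact mul_lt_mul hsB hsC hsp hsB0.le
  have hcA := t.cos_rule_A
  have h1 : Real.cos t.A ≤ 1 := Real.cos_le_one _
  have hb1 : -1 ≤ Real.cos t.B := Real.neg_one_le_cos _
  have hb2 : Real.cos t.B ≤ 1 := Real.cos_le_one _
  have hc1 : -1 ≤ Real.cos t.C := Real.neg_one_le_cos _
  have hc2 : Real.cos t.C ≤ 1 := Real.cos_le_one _
  have hbc : Real.cos t.B * Real.cos t.C ≤ 1 := by nlinarith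
  linarith
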